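/- arXiv:2310.03957 — 2 statements merged into one kernel-verified Lean document; each statement's English description precedes it below -/
import Mathlib

section
/- Let X be a measurable input space, Y a finite label set, and D a probability distribution on X × Y. Let Θ be a countable index set, for each θ ∈ Θ let f_θ : X → Y be a classifier, and let P be a probability distribution on Θ. With risk R(θ) = E_{(X,Y)~D}[1{f_θ(X) ≠ Y}] and empirical risk r(θ) the average 0–1 loss on an i.i.d. sample of size n ≥ 1, for every δ ∈ (0,1), with probability at least 1 − δ over the draw of the sample, simultaneously for every θ ∈ Θ with P(θ) > 0: R(θ) ≤ r(θ) + sqrt((log(1/P(θ)) + log(n/δ) + 2) / (2n − 1)). -/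
set_option maxHeartbeats 1000000

open MeasureTheory

open Real Set

open Real Set

/-- Hoeffding's lemma, Bernoulli case. -/
lemma hoeff_mgf (p t : ℝ) (hp0 : 0 ≤ p) (hp1 : p ≤ 1) (ht : 0 ≤ t) :
    Real.exp (t * p) * (1 - p + p * Real.exp (-t)) ≤ Real.exp (t ^ 2 / 8) := by
  rcases eq_or_lt_of_le hp1 with hp1' | hp1'
  · subst hp1'
    have : Real.exp (t * 1) * (1 - 1 + 1 * Real.exp (-t)) = 1 := by
      simp [← Real.exp_add]
    rw [this, ← Real.exp_zero]
    apply Real.exp_le_exp.2; positivity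
  have h1p : 0 < 1 - p := by linarith
  -- ψ and its positivity
  set ψ : ℝ → ℝ := fun s => 1 - p + p * Real.exp (-s) with hψdef
  have hψpos : ∀ s, 0 < ψ s := by
    intro s
    have : 0 ≤ p * Real.exp (-s) := by positivity
    simp only [hψdef]; linarith
  -- φ and derivatives
  set φ : ℝ → ℝ := fun s => s * p + Real.log (ψ s) with hφdef
  set φ' : ℝ → ℝ := fun s => p - p * Real.exp (-s) / ψ s with hφ'def
  have hψd : ∀ s, HasDerivAt ψ (-(p * Real.exp (-s))) s := by
    intro s
    have h1 : HasDerivAt (fun s : ℝ => Real.exp (-s)) (-Real.exp (-s)) s := by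
      simpa [Function.comp_def] using (Real.hasDerivAt_exp (-s)).comp s (hasDerivAt_neg s)
    exact ((h1.const_mul p).const_add (1 - p)).congr_deriv (by ring)
  have hφd : ∀ s, HasDerivAt φ (φ' s) s := by
    intro s
    have hlog : HasDerivAt (fun s => Real.log (ψ s)) (-(p * Real.exp (-s)) / ψ s) s :=
      (hψd s).log (hψpos s).ne'
    have := (hasDerivAt_mul_const p).add hlog
    exact this.congr_deriv (show _ = p - p * Real.exp (-s) / ψ s by ring)
  have hφ'd : ∀ s, HasDerivAt φ'
      ((p * Real.exp (-s) / ψ s) * (1 - p * Real.exp (-s) / ψ s)) s := by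
    intro s
    have hu : HasDerivAt (fun s : ℝ => p * Real.exp (-s)) (-(p * Real.exp (-s))) s := by
      have h1 : HasDerivAt (fun s : ℝ => Real.exp (-s)) (-Real.exp (-s)) s := by
        simpa [Function.comp_def] using (Real.hasDerivAt_exp (-s)).comp s (hasDerivAt_neg s)
      simpa [mul_comm, mul_assoc] using h1.const_mul p
    have hdiv : HasDerivAt (fun s => p * Real.exp (-s) / ψ s)
        ((-(p * Real.exp (-s)) * ψ s - p * Real.exp (-s) * (-(p * Real.exp (-s)))) / (ψ s)^2) s :=
      hu.div (hψd s) (hψpos s).ne'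
    have := (hasDerivAt_const s p).sub hdiv
    refine this.congr_deriv ?_
    have hψne : ψ s ≠ 0 := (hψpos s).ne'
    field_simp
    ring
  -- second derivative bound
  have hq01 : ∀ s, 0 ≤ p * Real.exp (-s) / ψ s ∧ p * Real.exp (-s) / ψ s ≤ 1 := by
    intro s
    have h1 : 0 ≤ p * Real.exp (-s) := by positivity
    have h2 : p * Real.exp (-s) ≤ ψ s := by simp only [hψdef]; linarith
    exact ⟨div_nonneg h1 (hψpos s).le, (div_le_one (hψpos s)).2 h2⟩
  have hφ''bd : ∀ s, |(p * Real.exp (-s) / ψ s) * (1 - p * Real.exp (-s) / ψ s)| ≤ 1/4 := by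
    intro s
    obtain ⟨h1, h2⟩ := hq01 s
    rw [abs_le]
    constructor <;> nlinarith [sq_nonneg (p * Real.exp (-s) / ψ s - 1/2)]
  -- |φ' s| ≤ s/4 on [0, t]
  have hφ'0 : φ' 0 = 0 := by
    simp only [hφ'def, hψdef, neg_zero, Real.exp_zero]
    field_simp
    ring
  have hφ'bd : ∀ s ∈ Set.Icc (0:ℝ) t, |φ' s| ≤ 1/4 * s := by
    intro s hs
    have := norm_image_sub_le_of_norm_deriv_le_segment'
      (f := φ') (f' := fun s => (p * Real.exp (-s) / ψ s) * (1 - p * Real.exp (-s) / ψ s))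
      (a := 0) (b := t) (C := 1/4)
      (fun x _ => (hφ'd x).hasDerivWithinAt) (fun x _ => hφ''bd x) s hs
    simpa [hφ'0] using this
  -- g := φ - s²/8 is antitone on [0,t]
  have hgd : ∀ s, HasDerivAt (fun s => φ s - s^2/8) (φ' s - s/4) s := by
    intro s
    have h2 : HasDerivAt (fun s : ℝ => s^2/8) (s/4) s := by
      have := (hasDerivAt_pow 2 s).div_const 8
      exact this.congr_deriv (by norm_num; ring)
    exact (hφd s).sub h2
  have hanti : AntitoneOn (fun s => φ s - s^2/8) (Set.Icc 0 t) := by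
    apply antitoneOn_of_deriv_nonpos (convex_Icc 0 t)
    · exact fun x _ => (hgd x).continuousAt.continuousWithinAt
    · exact fun x _ => ((hgd x).differentiableAt).differentiableWithinAt
    · intro x hx
      rw [interior_Icc] at hx
      rw [(hgd x).deriv]
      have := hφ'bd x ⟨hx.1.le, hx.2.le⟩
      have h1 := (abs_le.1 this).2
      linarith
  have hφt : φ t ≤ t^2/8 := by
    have h0 : (0:ℝ) ∈ Set.Icc (0:ℝ) t := by constructor <;> simp [ht]
    have h1 : t ∈ Set.Icc (0:ℝ) t := by constructor <;> simp [ht]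
    have := hanti h0 h1 ht
    have hφ0 : φ 0 = 0 := by simp [hφdef, hψdef]
    simp only [hφ0] at this
    linarith
  -- conclude
  have hLHS : Real.exp (t * p) * (1 - p + p * Real.exp (-t)) = Real.exp (φ t) := by
    show _ = Real.exp (t * p + Real.log (ψ t))
    rw [Real.exp_add, Real.exp_log (hψpos t)]
  rw [hLHS]
  exact Real.exp_le_exp.2 hφt

open MeasureTheory in
lemma hoeff_ineq {Z : Type*} [MeasurableSpace Z] (D : Measure Z) [IsProbabilityMeasure D]
    {A : Set Z} (hA : MeasurableSet A) (n : ℕ) (hn : 1 ≤ n) {ε : ℝ} (hε : 0 < ε) :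
    (Measure.pi fun _ : Fin n => D)
      {S : Fin n → Z | (∑ i, A.indicator (fun _ => (1:ℝ)) (S i)) / n + ε < (D A).toReal}
      ≤ ENNReal.ofReal (Real.exp (-2 * n * ε ^ 2)) := by
  classical
  set μ := Measure.pi fun _ : Fin n => D with hμ
  set p : ℝ := (D A).toReal with hp
  have hp0 : 0 ≤ p := ENNReal.toReal_nonneg
  have hp1 : p ≤ 1 := by
    rw [hp]
    exact ENNReal.toReal_le_of_le_ofReal zero_le_one (by simpa using prob_le_one (μ := D) (s := A))
  set t : ℝ := 4 * ε with hT
  have ht : 0 < t := by positivity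
  set ind : Z → ℝ := A.indicator (fun _ => (1:ℝ)) with hind
  set F : Z → ℝ := fun z => Real.exp (t * (p - ind z)) with hF
  set h : (Fin n → Z) → ℝ := fun S => Real.exp (t * (n * p - ∑ i, ind (S i))) with hh
  have hnpos : (0:ℝ) < n := by exact_mod_cast hn
  -- event inclusion
  have hincl : {S : Fin n → Z | (∑ i, ind (S i)) / n + ε < p}
      ⊆ {S | Real.exp (t * n * ε) ≤ h S} := by
    intro S hS
    simp only [Set.mem_setOf_eq] at hS ⊢
    rw [hh]
    apply Real.exp_le_exp.2
    have h1 : (∑ i, ind (S i)) / n + ε < p := hS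
    have h2 : n * ε ≤ n * p - ∑ i, ind (S i) := by
      have := (div_lt_iff₀ hnpos).1 (by linarith : (∑ i, ind (S i)) / n < p - ε)
      nlinarith
    calc t * n * ε = t * (n * ε) := by ring
    _ ≤ t * (n * p - ∑ i, ind (S i)) := by
        exact mul_le_mul_of_nonneg_left h2 ht.le
  -- measurability
  have hindm : Measurable ind := measurable_const.indicator hA
  have hhm : Measurable h := by
    apply Real.measurable_exp.comp
    apply Measurable.const_mul
    exact (measurable_const.sub (Finset.measurable_sum _
      (fun i _ => hindm.comp (measurable_pi_apply i))))
  -- nonneg and bounded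
  have hind01 : ∀ z, 0 ≤ ind z ∧ ind z ≤ 1 := by
    intro z; rw [hind]; by_cases hz : z ∈ A <;> simp [Set.indicator_of_mem, Set.indicator_of_notMem, hz]
  have hhnonneg : ∀ S, 0 ≤ h S := fun S => (Real.exp_pos _).le
  have hhbd : ∀ S, h S ≤ Real.exp (t * (n * p)) := by
    intro S
    apply Real.exp_le_exp.2
    apply mul_le_mul_of_nonneg_left _ ht.le
    have : 0 ≤ ∑ i, ind (S i) := Finset.sum_nonneg fun i _ => (hind01 (S i)).1
    linarith
  have hhint : Integrable h μ := by
    refine Integrable.mono' (integrable_const (Real.exp (t * (n * p)))) hhm.aestronglyMeasurable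
      (ae_of_all _ fun S => ?_)
    rw [Real.norm_eq_abs, abs_of_nonneg (hhnonneg S)]
    exact hhbd S
  -- product structure and integral computation
  have hprod : ∀ S : Fin n → Z, h S = ∏ i, F (S i) := by
    intro S
    rw [hh, hF]
    rw [← Real.exp_sum]
    have : ∑ i, t * (p - ind (S i)) = t * (↑n * p - ∑ i, ind (S i)) := by
      rw [← Finset.mul_sum, Finset.sum_sub_distrib, Finset.sum_const, Finset.card_univ,
        Fintype.card_fin, nsmul_eq_mul]
    rw [this]
  have hFint : ∫ z, F z ∂D = Real.exp (t * p) * (1 - p + p * Real.exp (-t)) := by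
    have hFz : ∀ z, F z = Real.exp (t * p) *
        (A.indicator (fun _ => Real.exp (-t) - 1) z + 1) := by
      intro z
      rw [hF, hind]
      by_cases hz : z ∈ A
      · simp only [Set.indicator_of_mem hz]
        rw [show t * (p - 1) = t * p + (-t) by ring, Real.exp_add]
        ring
      · simp only [Set.indicator_of_notMem hz]
        rw [show t * (p - 0) = t * p by ring]
        ring
    simp_rw [hFz]
    rw [integral_const_mul]
    rw [integral_add ((integrable_const _).indicator hA) (integrable_const 1)]
    rw [integral_indicator_const _ hA, integral_const]
    simp only [measure_univ, measureReal_def, ENNReal.toReal_one, smul_eq_mul, one_smul]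
    rw [← hp]
    ring
  have hint_eq : ∫ S, h S ∂μ = (Real.exp (t * p) * (1 - p + p * Real.exp (-t))) ^ n := by
    letI : MeasureSpace Z := ⟨D⟩
    have hμvol : μ = (volume : Measure (Fin n → Z)) := rfl
    rw [hμvol]
    simp_rw [hprod]
    rw [show (volume : Measure (Fin n → Z)) = Measure.pi fun _ => volume from rfl,
      MeasureTheory.integral_fintype_prod_eq_pow (ι := Fin n) (μ := (volume : Measure Z)) F]
    rw [Fintype.card_fin, show (∫ (x : Z), F x) = ∫ (z : Z), F z ∂D from rfl, hFint]
  -- Markov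
  set a : ℝ := Real.exp (t * n * ε) with ha
  have hapos : 0 < a := Real.exp_pos _
  have hmarkov := mul_meas_ge_le_integral_of_nonneg (μ := μ)
    (ae_of_all _ hhnonneg) hhint a
  have hEfin : μ {S | a ≤ h S} ≠ ⊤ := measure_ne_top μ _
  have hmgf : ∫ S, h S ∂μ ≤ Real.exp (t ^ 2 / 8) ^ n := by
    rw [hint_eq]
    apply pow_le_pow_left₀ _ (hoeff_mgf p t hp0 hp1 ht.le)
    have h1 : 0 ≤ p * Real.exp (-t) := by positivity
    have h2 : 0 < Real.exp (t * p) := Real.exp_pos _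
    nlinarith
  have hfinal : (μ {S | a ≤ h S}).toReal ≤ Real.exp (-2 * n * ε ^ 2) := by
    have h1 : a * (μ {S | a ≤ h S}).toReal ≤ Real.exp (t ^ 2 / 8) ^ n :=
      le_trans hmarkov hmgf
    have h2 : (μ {S | a ≤ h S}).toReal ≤ Real.exp (t ^ 2 / 8) ^ n / a :=
      (le_div_iff₀ hapos).2 (by linarith [h1])
    refine le_trans h2 (le_of_eq ?_)
    rw [ha, ← Real.exp_nat_mul, ← Real.exp_sub]
    congr 1
    rw [hT]
    ring
  calc μ {S : Fin n → Z | (∑ i, ind (S i)) / n + ε < p}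
      ≤ μ {S | a ≤ h S} := measure_mono hincl
    _ = ENNReal.ofReal ((μ {S | a ≤ h S}).toReal) := (ENNReal.ofReal_toReal hEfin).symm
    _ ≤ ENNReal.ofReal (Real.exp (-2 * n * ε ^ 2)) := ENNReal.ofReal_le_ofReal hfinal

/-- Derandomized PAC-Bayes bound (point-mass posterior) over a countable hypothesis
class: for any prior `P`, with probability at least `1 - δ` over an i.i.d. sample of
size `n` from `D`, simultaneously for every `θ` with `P θ > 0`,
`R θ ≤ r θ S + sqrt ((log (1 / P θ) + log (n/δ) + 2) / (2 n - 1))`. -/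
theorem pac_bayes_derandomized
    {X : Type*} [MeasurableSpace X] {Y : Type*} [MeasurableSpace Y] [Fintype Y] [DecidableEq Y]
    {Θ : Type*} [Countable Θ]
    (f : Θ → X → Y)
    (D : Measure (X × Y)) [IsProbabilityMeasure D]
    (P : Θ → ℝ) (hP0 : ∀ θ, 0 ≤ P θ) (hP1 : ∑' θ, P θ = 1)
    (n : ℕ) (hn : 1 ≤ n)
    (δ : ℝ) (hδ0 : 0 < δ) (hδ1 : δ < 1)
    (R : Θ → ℝ) (hR : ∀ θ, R θ = ∫ q, (if f θ q.1 ≠ q.2 then (1 : ℝ) else 0) ∂D)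
    (r : Θ → (Fin n → X × Y) → ℝ)
    (hr : ∀ θ S, r θ S = (∑ i, if f θ (S i).1 ≠ (S i).2 then (1 : ℝ) else 0) / n) :
    ENNReal.ofReal (1 - δ) ≤
      (Measure.pi fun _ : Fin n => D)
        {S | ∀ θ : Θ, 0 < P θ →
          R θ ≤ r θ S +
            Real.sqrt ((Real.log (1 / P θ) + Real.log (n / δ) + 2) / (2 * n - 1))} := by
  classical
  set μ := Measure.pi fun _ : Fin n => D with hμ
  have hnR : (1:ℝ) ≤ (n:ℝ) := by exact_mod_cast hn
  set ε : Θ → ℝ :=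
    fun θ => Real.sqrt ((Real.log (1 / P θ) + Real.log (n / δ) + 2) / (2 * n - 1)) with hεdef
  set Good := {S : Fin n → X × Y | ∀ θ : Θ, 0 < P θ → R θ ≤ r θ S + ε θ} with hGood
  have hsumm : Summable P := by
    by_contra hs; rw [tsum_eq_zero_of_not_summable hs] at hP1; norm_num at hP1
  have hPle1 : ∀ θ, P θ ≤ 1 := fun θ => hP1 ▸ Summable.le_tsum hsumm θ (fun θ' _ => hP0 θ')
  have hden : (0:ℝ) < 2 * n - 1 := by linarith
  -- nonnegativity of empirical risk
  have hrnn : ∀ θ S, 0 ≤ r θ S := by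
    intro θ S
    rw [hr]
    apply div_nonneg _ (by positivity)
    apply Finset.sum_nonneg
    intro i _
    split <;> norm_num
  -- positivity of ε
  have hεpos : ∀ θ, 0 < P θ → 0 < ε θ := by
    intro θ hPθ
    rw [hεdef]
    apply Real.sqrt_pos.2
    apply div_pos _ hden
    have h1 : 0 ≤ Real.log (1 / P θ) :=
      Real.log_nonneg ((le_div_iff₀ hPθ).2 (by linarith [hPle1 θ]))
    have h2 : 0 ≤ Real.log (↑n / δ) :=
      Real.log_nonneg ((le_div_iff₀ hδ0).2 (by linarith))
    linarith
  -- numeric bound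
  have hnum : ∀ θ, 0 < P θ → Real.exp (-2 * n * (ε θ) ^ 2) ≤ P θ * δ := by
    intro θ hPθ
    set a : ℝ := Real.log (1 / P θ) + Real.log (↑n / δ) + 2 with ha
    have ha0 : 0 ≤ a := by
      have h1 : 0 ≤ Real.log (1 / P θ) :=
        Real.log_nonneg ((le_div_iff₀ hPθ).2 (by linarith [hPle1 θ]))
      have h2 : 0 ≤ Real.log (↑n / δ) :=
        Real.log_nonneg ((le_div_iff₀ hδ0).2 (by linarith))
      rw [ha]; linarith
    have hsq : (ε θ) ^ 2 = a / (2 * n - 1) := by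
      rw [hεdef]
      exact Real.sq_sqrt (div_nonneg ha0 hden.le)
    have hstep : -2 * n * (ε θ) ^ 2 ≤ -a := by
      rw [hsq]
      have hA2 : a ≤ 2 * ↑n * (a / (2 * ↑n - 1)) := by
        rw [mul_div_assoc', le_div_iff₀ hden]
        nlinarith
      linarith
    calc Real.exp (-2 * n * (ε θ) ^ 2) ≤ Real.exp (-a) := Real.exp_le_exp.2 hstep
      _ = P θ * (δ / ↑n) * Real.exp (-2) := by
          rw [ha, show -(Real.log (1 / P θ) + Real.log (↑n / δ) + 2) =
            (-Real.log (1 / P θ)) + (-Real.log (↑n / δ)) + (-2) by ring,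
            Real.exp_add, Real.exp_add, Real.exp_neg, Real.exp_neg,
            Real.exp_log (by positivity : (0:ℝ) < 1 / P θ),
            Real.exp_log (by positivity : (0:ℝ) < ↑n / δ)]
          rw [one_div, inv_inv, inv_div]
      _ ≤ P θ * δ := by
          have h1 : Real.exp (-2) ≤ 1 := Real.exp_le_one_iff.2 (by norm_num)
          have h2 : δ / ↑n ≤ δ := div_le_self hδ0.le hnR
          calc P θ * (δ / ↑n) * Real.exp (-2) ≤ P θ * (δ / ↑n) * 1 :=
              mul_le_mul_of_nonneg_left h1 (by positivity)
            _ = P θ * (δ / ↑n) := by ring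
            _ ≤ P θ * δ := mul_le_mul_of_nonneg_left h2 hPθ.le
  -- per-θ tail bound
  have key : ∀ θ : Θ, 0 < P θ →
      μ {S | ¬ (R θ ≤ r θ S + ε θ)} ≤ ENNReal.ofReal (P θ * δ) := by
    intro θ hPθ
    set g : X × Y → ℝ := fun q => if f θ q.1 ≠ q.2 then (1:ℝ) else 0 with hg
    by_cases hint : Integrable g D
    · obtain ⟨hsm, -⟩ := hint
      set g' := hsm.mk g with hg'
      have hae : g =ᵐ[D] g' := hsm.ae_eq_mk
      set A : Set (X × Y) := g' ⁻¹' {1} with hA'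
      have hA : MeasurableSet A :=
        hsm.stronglyMeasurable_mk.measurable (measurableSet_singleton 1)
      have hgA : g =ᵐ[D] A.indicator (fun _ => (1:ℝ)) := by
        filter_upwards [hae] with q hq
        by_cases hc : f θ q.1 ≠ q.2
        · have h1 : g q = 1 := by rw [hg]; simp [hc]
          have h2 : q ∈ A := by rw [hA']; simp [← hq, h1]
          rw [h1, Set.indicator_of_mem h2]
        · have h1 : g q = 0 := by rw [hg]; simp [hc]
          have h2 : q ∉ A := by
            rw [hA']; simp only [Set.mem_preimage, Set.mem_singleton_iff, ← hq, h1]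
            norm_num
          rw [h1, Set.indicator_of_notMem h2]
      have hRA : R θ = (D A).toReal := by
        rw [hR θ, show (∫ q, (if f θ q.1 ≠ q.2 then (1:ℝ) else 0) ∂D) = ∫ q, g q ∂D from rfl,
          integral_congr_ae hgA, integral_indicator_const (1:ℝ) hA, smul_eq_mul, mul_one, measureReal_def]
      set T := {S : Fin n → X × Y | ∀ i, g (S i) = A.indicator (fun _ => (1:ℝ)) (S i)} with hT'
      have hT : ∀ᵐ S ∂μ, S ∈ T :=
        Filter.eventually_all.2 fun i =>
          (Measure.tendsto_eval_ae_ae (μ := fun _ : Fin n => D) (i := i)).eventually hgA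
      have hTnull : μ Tᶜ = 0 := by
        have := ae_iff.1 hT
        exact this
      have hsub : {S | ¬ (R θ ≤ r θ S + ε θ)} ∩ T ⊆
          {S : Fin n → X × Y | (∑ i, A.indicator (fun _ => (1:ℝ)) (S i)) / n + ε θ
            < (D A).toReal} := by
        rintro S ⟨hS1, hS2⟩
        simp only [Set.mem_setOf_eq] at hS1 ⊢
        have hrS : r θ S = (∑ i, A.indicator (fun _ => (1:ℝ)) (S i)) / n := by
          rw [hr]
          congr 1
          exact Finset.sum_congr rfl fun i _ => hS2 i
        rw [← hrS, ← hRA]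
        linarith [not_le.1 hS1]
      calc μ {S | ¬ (R θ ≤ r θ S + ε θ)}
          ≤ μ (({S | ¬ (R θ ≤ r θ S + ε θ)} ∩ T) ∪ Tᶜ) := by
            apply measure_mono
            intro S hS
            by_cases hST : S ∈ T
            · exact Or.inl ⟨hS, hST⟩
            · exact Or.inr hST
        _ ≤ μ ({S | ¬ (R θ ≤ r θ S + ε θ)} ∩ T) + μ Tᶜ := measure_union_le _ _
        _ ≤ μ {S : Fin n → X × Y |
              (∑ i, A.indicator (fun _ => (1:ℝ)) (S i)) / n + ε θ < (D A).toReal} + 0 := by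
            exact add_le_add (measure_mono hsub) (le_of_eq hTnull)
        _ ≤ ENNReal.ofReal (Real.exp (-2 * n * (ε θ) ^ 2)) + 0 := by
            exact add_le_add_left (hoeff_ineq D hA n hn (hεpos θ hPθ)) 0
        _ ≤ ENNReal.ofReal (P θ * δ) := by
            rw [add_zero]
            exact ENNReal.ofReal_le_ofReal (hnum θ hPθ)
    · have hR0 : R θ = 0 := by rw [hR θ]; exact integral_undef hint
      have : {S : Fin n → X × Y | ¬ (R θ ≤ r θ S + ε θ)} = ∅ := by
        apply Set.eq_empty_iff_forall_notMem.2
        intro S hS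
        apply hS
        rw [hR0]
        have := hrnn θ S
        have := (hεpos θ hPθ).le
        linarith
      rw [this]
      simp
  -- union bound
  have hBadsub : Goodᶜ ⊆ ⋃ θ : Θ, {S | 0 < P θ ∧ ¬ (R θ ≤ r θ S + ε θ)} := by
    intro S hS
    simp only [hGood, Set.mem_compl_iff, Set.mem_setOf_eq, not_forall] at hS
    obtain ⟨θ, hθ1, hθ2⟩ := hS
    exact Set.mem_iUnion.2 ⟨θ, hθ1, hθ2⟩
  have hBad : μ Goodᶜ ≤ ENNReal.ofReal δ := by
    calc μ Goodᶜ ≤ μ (⋃ θ : Θ, {S | 0 < P θ ∧ ¬ (R θ ≤ r θ S + ε θ)}) := measure_mono hBadsub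
      _ ≤ ∑' θ : Θ, μ {S | 0 < P θ ∧ ¬ (R θ ≤ r θ S + ε θ)} := measure_iUnion_le _
      _ ≤ ∑' θ : Θ, ENNReal.ofReal (P θ * δ) := by
          apply ENNReal.tsum_le_tsum
          intro θ
          by_cases hPθ : 0 < P θ
          · refine le_trans (measure_mono ?_) (key θ hPθ)
            intro S hS
            exact hS.2
          · have : {S : Fin n → X × Y | 0 < P θ ∧ ¬ (R θ ≤ r θ S + ε θ)} = ∅ := by
              apply Set.eq_empty_iff_forall_notMem.2
              intro S hS
              exact hPθ hS.1
            rw [this]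
            simp
      _ = ENNReal.ofReal δ := by
          rw [← ENNReal.ofReal_tsum_of_nonneg (fun θ => mul_nonneg (hP0 θ) hδ0.le)
            (hsumm.mul_right δ), tsum_mul_right, hP1, one_mul]
  have h1 : (1:ENNReal) ≤ μ Good + ENNReal.ofReal δ := by
    calc (1:ENNReal) = μ Set.univ := measure_univ.symm
      _ = μ (Good ∪ Goodᶜ) := by rw [Set.union_compl_self]
      _ ≤ μ Good + μ Goodᶜ := measure_union_le _ _
      _ ≤ μ Good + ENNReal.ofReal δ := add_le_add_right hBad _
  have h2 : ENNReal.ofReal (1 - δ) + ENNReal.ofReal δ = 1 := by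
    rw [← ENNReal.ofReal_add (by linarith) hδ0.le]
    norm_num
  have h3 : ENNReal.ofReal (1 - δ) + ENNReal.ofReal δ ≤ μ Good + ENNReal.ofReal δ :=
    h2 ▸ h1
  exact (ENNReal.add_le_add_iff_right ENNReal.ofReal_ne_top).1 h3
end

section
/- Let X be a measurable input space, Y = {1,…,K}, V a finite nonempty vocabulary, L ≥ 1, and Θ = V^{K·L}, with each θ ∈ Θ written as K prompts θ = (θ¹,…,θ^K), θ^i = (θ^i₁,…,θ^i_L), and for each θ ∈ Θ a classifier f_θ : X → Y. For each class i and position j, let p^i_j(· | prefix) be a conditional probability distribution on V given any prefix in V^{j−1}, and let the prior be P(θ) = Π_{i=1}^K Π_{j=1}^L p^i_j(θ^i_j | θ^i₁,…,θ^i_{j−1}). Let D be a probability distribution on X × Y, R(θ) the risk under the 0–1 loss, and r(θ) the empirical 0–1 risk on an i.i.d. sample of size n ≥ 1. Then for every δ ∈ (0,1), with probability at least 1 − δ over the sample, simultaneously for every θ̂ ∈ Θ with P(θ̂) > 0: R(θ̂) ≤ r(θ̂) + sqrt((−Σ_{i=1}^K Σ_{j=1}^L log p^i_j(θ̂^i_j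 | θ̂^i₁,…,θ̂^i_{j−1}) + log(n/δ) + 2) / (2n − 1)). -/
open MeasureTheory Real
open scoped ENNReal


lemma hoeff_Dpos {a : ℝ} (ha0 : 0 ≤ a) (ha1 : a ≤ 1) (s : ℝ) :
    0 < 1 - a + a * Real.exp (-s) := by
  rcases eq_or_lt_of_le ha0 with h | h
  · simp [← h]
  · nlinarith [Real.exp_pos (-s), mul_pos h (Real.exp_pos (-s))]

lemma hoeff_hd1 {a : ℝ} (ha0 : 0 ≤ a) (ha1 : a ≤ 1) (s : ℝ) :
    HasDerivAt (fun s => s * a + Real.log (1 - a + a * Real.exp (-s)))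
      (a - a * Real.exp (-s) / (1 - a + a * Real.exp (-s))) s := by
  have h1 : HasDerivAt (fun s : ℝ => s * a) a s := by
    simpa using (hasDerivAt_id s).mul_const a
  have h2 : HasDerivAt (fun s : ℝ => 1 - a + a * Real.exp (-s))
      (-(a * Real.exp (-s))) s := by
    have he : HasDerivAt (fun s : ℝ => Real.exp (-s)) (Real.exp (-s) * (-1)) s :=
      (Real.hasDerivAt_exp (-s)).comp s (hasDerivAt_neg s)
    have := (he.const_mul a).const_add (1 - a)
    exact this.congr_deriv (by ring)
  have h3 := h2.log (ne_of_gt (hoeff_Dpos ha0 ha1 s))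
  exact (h1.add h3).congr_deriv (by ring)

lemma hoeff_hd2 {a : ℝ} (ha0 : 0 ≤ a) (ha1 : a ≤ 1) (s : ℝ) :
    HasDerivAt (fun s => a - a * Real.exp (-s) / (1 - a + a * Real.exp (-s)))
      ((a * Real.exp (-s) * (1 - a + a * Real.exp (-s)) - (a * Real.exp (-s))^2)
        / (1 - a + a * Real.exp (-s))^2) s := by
  have he : HasDerivAt (fun s : ℝ => a * Real.exp (-s)) (-(a * Real.exp (-s))) s := by
    have he0 : HasDerivAt (fun s : ℝ => Real.exp (-s)) (Real.exp (-s) * (-1)) s :=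
      (Real.hasDerivAt_exp (-s)).comp s (hasDerivAt_neg s)
    have := he0.const_mul a
    exact this.congr_deriv (by ring)
  have h2 : HasDerivAt (fun s : ℝ => 1 - a + a * Real.exp (-s))
      (-(a * Real.exp (-s))) s := by
    have := he.const_add (1 - a); convert this using 1
  have hdiv := he.div h2 (ne_of_gt (hoeff_Dpos ha0 ha1 s))
  have := (hdiv.const_sub a)
  exact this.congr_deriv (by ring)

lemma nonneg_of_deriv {F F' : ℝ → ℝ} (hF : ∀ s, HasDerivAt F (F' s) s)
    (h0 : F 0 = 0) (hF' : ∀ s, 0 ≤ s → 0 ≤ F' s) {t : ℝ} (ht : 0 ≤ t) : 0 ≤ F t := by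
  have mono : MonotoneOn F (Set.Ici 0) := by
    apply monotoneOn_of_deriv_nonneg (convex_Ici 0)
    · exact fun x _ => (hF x).differentiableAt.continuousAt.continuousWithinAt
    · exact fun x _ => (hF x).differentiableAt.differentiableWithinAt
    · intro x hx
      rw [interior_Ici] at hx
      rw [(hF x).deriv]
      exact hF' x (le_of_lt hx)
  have := mono (Set.self_mem_Ici) ht ht
  linarith

/-- Hoeffding's lemma, Bernoulli mgf form. -/
lemma hoeffding_mgf {a t : ℝ} (ha0 : 0 ≤ a) (ha1 : a ≤ 1) (ht : 0 ≤ t) :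
    Real.exp (t * a) * (1 + (Real.exp (-t) - 1) * a) ≤ Real.exp (t ^ 2 / 8) := by
  set D : ℝ → ℝ := fun s => 1 - a + a * Real.exp (-s) with hD
  have hDpos : ∀ s, 0 < D s := hoeff_Dpos ha0 ha1
  set h' : ℝ → ℝ := fun s => a - a * Real.exp (-s) / D s with hh'
  -- second derivative bound
  have hdd : ∀ s, 0 ≤ s → 0 ≤ (1 : ℝ) / 4 -
      ((a * Real.exp (-s) * D s - (a * Real.exp (-s)) ^ 2) / (D s) ^ 2) := by
    intro s _
    have hw : (a * Real.exp (-s) * D s - (a * Real.exp (-s)) ^ 2) / (D s) ^ 2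
        = (a * Real.exp (-s) / D s) - (a * Real.exp (-s) / D s) ^ 2 := by
      have hd0 : D s ≠ 0 := (hDpos s).ne'
      generalize D s = d at hd0 ⊢
      field_simp
    rw [hw]
    nlinarith [sq_nonneg (a * Real.exp (-s) / D s - 1 / 2)]
  -- first derivative bound : h' s ≤ s / 4 for s ≥ 0
  have hstep1 : ∀ s, 0 ≤ s → h' s ≤ s / 4 := by
    intro s hs
    have := nonneg_of_deriv (F := fun s => s / 4 - h' s)
      (F' := fun s => (1 : ℝ) / 4 -
        ((a * Real.exp (-s) * D s - (a * Real.exp (-s)) ^ 2) / (D s) ^ 2))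
      (fun s => by
        have h1 : HasDerivAt (fun s : ℝ => s / 4) (1 / 4) s := by
          simpa using (hasDerivAt_id s).div_const 4
        exact h1.sub (hoeff_hd2 ha0 ha1 s))
      (by simp [hh', hD]) hdd hs
    linarith
  -- function bound : h s ≤ s^2/8
  have hstep2 : (t * a + Real.log (D t)) ≤ t ^ 2 / 8 := by
    have := nonneg_of_deriv (F := fun s => s ^ 2 / 8 - (s * a + Real.log (D s)))
      (F' := fun s => s / 4 - h' s)
      (fun s => by
        have h1 : HasDerivAt (fun s : ℝ => s ^ 2 / 8) (s / 4) s := by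
          have := (hasDerivAt_pow 2 s).div_const 8
          exact this.congr_deriv (by norm_num; ring)
        exact h1.sub (hoeff_hd1 ha0 ha1 s))
      (by simp [hD]) (fun s hs => by have := hstep1 s hs; linarith) ht
    linarith
  have hexp : Real.exp (t * a) * (1 + (Real.exp (-t) - 1) * a)
      = Real.exp (t * a + Real.log (D t)) := by
    rw [Real.exp_add, Real.exp_log (hDpos t)]
    simp only [hD]
    ring
  rw [hexp]
  exact Real.exp_le_exp.2 hstep2


lemma sum_prod_cond {V : Type*} [Fintype V] :
    ∀ (L : ℕ) (q : (j : Fin L) → (Fin j → V) → V → ℝ),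
      (∀ j pre, ∑ v, q j pre v = 1) →
      ∑ w : Fin L → V, ∏ j, q j (fun m => w (Fin.castLE j.isLt.le m)) (w j) = 1 := by
  intro L
  induction L with
  | zero => intro q hq; simp
  | succ m ih =>
    intro q hq
    rw [← Equiv.sum_comp (Fin.snocEquiv (fun _ => V))]
    have key : ∀ (x : V × (Fin m → V)),
        ∏ j, q j (fun m' => (Fin.snocEquiv (fun _ => V)) x (Fin.castLE j.isLt.le m'))
            ((Fin.snocEquiv (fun _ => V)) x j)
        = (∏ j : Fin m, q j.castSucc
              (fun m' => x.2 (Fin.castLE j.isLt.le m')) (x.2 j))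
          * q (Fin.last m) (fun m' => x.2 m') x.1 := by
      intro x
      rw [Fin.prod_univ_castSucc]
      congr 1
      · apply Finset.prod_congr rfl
        intro j _
        have e1 : ∀ m' : Fin (j.castSucc : Fin (m+1)).val,
            (Fin.snocEquiv (fun _ => V)) x (Fin.castLE (j.castSucc).isLt.le m')
              = x.2 (Fin.castLE j.isLt.le m') := by
          intro m'
          have : (Fin.castLE (j.castSucc).isLt.le m')
              = Fin.castSucc (Fin.castLE j.isLt.le m') := by
            ext; simp
          rw [this]
          exact (Fin.snoc_castSucc (α := fun _ => V) x.1 x.2 _ :)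
        have e2 : (Fin.snocEquiv (fun _ => V)) x j.castSucc = x.2 j := by
          simp [Fin.snocEquiv, Fin.snoc_castSucc]
        rw [e2]
        congr 1
        funext m'
        exact e1 m'
      · have e3 : (Fin.snocEquiv (fun _ => V)) x (Fin.last m) = x.1 := by
          simp [Fin.snocEquiv]
        rw [e3]
        congr 1
        funext m'
        have : (Fin.castLE (Fin.last m).isLt.le m') = Fin.castSucc m' := by
          ext; simp
        rw [this]
        simp [Fin.snocEquiv, Fin.snoc_castSucc]
    calc ∑ x : V × (Fin m → V), ∏ j, q j
            (fun m' => (Fin.snocEquiv (fun _ => V)) x (Fin.castLE j.isLt.le m'))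
            ((Fin.snocEquiv (fun _ => V)) x j)
        = ∑ x : V × (Fin m → V),
            (∏ j : Fin m, q j.castSucc
              (fun m' => x.2 (Fin.castLE j.isLt.le m')) (x.2 j))
          * q (Fin.last m) (fun m' => x.2 m') x.1 := by
          exact Finset.sum_congr rfl fun x _ => key x
      _ = ∑ w : Fin m → V, ∑ v : V,
            (∏ j : Fin m, q j.castSucc
              (fun m' => w (Fin.castLE j.isLt.le m')) (w j))
          * q (Fin.last m) (fun m' => w m') v := by
          rw [Fintype.sum_prod_type]
          rw [Finset.sum_comm]
      _ = ∑ w : Fin m → V,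
            (∏ j : Fin m, q j.castSucc
              (fun m' => w (Fin.castLE j.isLt.le m')) (w j)) := by
          apply Finset.sum_congr rfl
          intro w _
          rw [← Finset.mul_sum, hq, mul_one]
      _ = 1 := ih (fun j pre => q j.castSucc pre) (fun j pre => hq j.castSucc pre)


lemma chernoff {Ω : Type*} [MeasureSpace Ω] [IsProbabilityMeasure (volume : Measure Ω)]
    (g : Ω → ℝ) (hgm : Measurable g) (hg0 : ∀ x, 0 ≤ g x) (hg1 : ∀ x, g x ≤ 1)
    (n : ℕ) (hn : 1 ≤ n) (ε : ℝ) (hε : 0 < ε) :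
    (volume : Measure (Fin n → Ω)) {S | ∑ i, g (S i) ≤ n * ((∫ x, g x) - ε)} ≤
      ENNReal.ofReal (Real.exp (-(2 * n * ε ^ 2))) := by
  set μ : ℝ := ∫ x, g x with hμ
  set t : ℝ := 4 * ε with htdef
  have ht : 0 < t := by positivity
  have hgint : Integrable g := by
    refine ⟨hgm.aestronglyMeasurable, ?_⟩
    apply (hasFiniteIntegral_const (1 : ℝ)).mono'
    filter_upwards with x
    rw [Real.norm_eq_abs, abs_of_nonneg (hg0 x)]
    exact hg1 x
  have hμ0 : 0 ≤ μ := integral_nonneg hg0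
  have hμ1 : μ ≤ 1 := by
    calc μ ≤ ∫ _ : Ω, (1 : ℝ) := integral_mono hgint (integrable_const 1) hg1
    _ = 1 := by simp
  -- the product mgf function
  set F : (Fin n → Ω) → ℝ := fun S => ∏ i, Real.exp (-t * g (S i)) with hF
  have hFm : Measurable F := by
    apply Finset.measurable_prod
    intro i _
    exact (Real.measurable_exp.comp ((hgm.comp (measurable_pi_apply i)).const_mul (-t)))
  have hFpos : ∀ S, 0 < F S := fun S => Finset.prod_pos fun i _ => Real.exp_pos _
  have hFle : ∀ S, F S ≤ 1 := by
    intro S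
    apply Finset.prod_le_one (fun i _ => (Real.exp_pos _).le)
    intro i _
    rw [Real.exp_le_one_iff]
    have := hg0 (S i)
    nlinarith
  have hFint : Integrable F := by
    refine ⟨hFm.aestronglyMeasurable, ?_⟩
    apply (hasFiniteIntegral_const (1 : ℝ)).mono'
    filter_upwards with S
    rw [Real.norm_eq_abs, abs_of_nonneg (hFpos S).le]
    exact hFle S
  -- value of ∫ F
  have hFval : ∫ S, F S = (∫ x, Real.exp (-t * g x)) ^ n := by
    rw [hF]
    rw [MeasureTheory.integral_fintype_prod_volume_eq_pow (ι := Fin n) (fun x => Real.exp (-t * g x))]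
    simp
  -- mgf bound
  have hexp_int : Integrable (fun x => Real.exp (-t * g x)) := by
    refine ⟨(Real.measurable_exp.comp (hgm.const_mul (-t))).aestronglyMeasurable, ?_⟩
    apply (hasFiniteIntegral_const (1 : ℝ)).mono'
    filter_upwards with x
    rw [Real.norm_eq_abs, abs_of_nonneg (Real.exp_pos _).le, Real.exp_le_one_iff]
    nlinarith [hg0 x]
  have hmgf_pt : ∀ x, Real.exp (-t * g x) ≤ 1 + (Real.exp (-t) - 1) * g x := by
    intro x
    have hc := convexOn_exp.2 (Set.mem_univ (0 : ℝ)) (Set.mem_univ (-t))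
      (by linarith [hg1 x] : 0 ≤ 1 - g x) (hg0 x) (by ring)
    simp only [smul_eq_mul, mul_zero, Real.exp_zero, mul_one] at hc
    calc Real.exp (-t * g x) = Real.exp (0 + g x * -t) := by rw [show -t * g x = 0 + g x * -t by ring]
    _ ≤ (1 - g x) + g x * Real.exp (-t) := hc
    _ = 1 + (Real.exp (-t) - 1) * g x := by ring
  have hmgf : ∫ x, Real.exp (-t * g x) ≤ 1 + (Real.exp (-t) - 1) * μ := by
    have : ∫ x, (1 + (Real.exp (-t) - 1) * g x) = 1 + (Real.exp (-t) - 1) * μ := by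
      rw [integral_add (integrable_const 1) (hgint.const_mul _)]
      rw [integral_const_mul]
      simp [hμ]
    rw [← this]
    exact integral_mono hexp_int (by exact (integrable_const 1).add (hgint.const_mul _)) hmgf_pt
  have hbase_pos : 0 < 1 + (Real.exp (-t) - 1) * μ := by
    nlinarith [Real.exp_pos (-t), (Real.exp_lt_one_iff.2 (by linarith : -t < 0)).le]
  -- Hoeffding mgf bound
  have hhoeff : Real.exp (t * μ) * (1 + (Real.exp (-t) - 1) * μ) ≤ Real.exp (t ^ 2 / 8) :=
    hoeffding_mgf hμ0 hμ1 ht.le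
  -- Markov
  set c : ℝ := Real.exp (t * (n * ε - n * μ)) with hc
  have hcpos : 0 < c := Real.exp_pos _
  have hsub : {S : Fin n → Ω | ∑ i, g (S i) ≤ n * (μ - ε)} ⊆ {S | c ≤ F S} := by
    intro S hS
    simp only [Set.mem_setOf_eq] at hS ⊢
    have hFexp : F S = Real.exp (∑ i, -t * g (S i)) := by
      rw [Real.exp_sum]
    rw [hFexp, hc, Real.exp_le_exp]
    have : ∑ i, -t * g (S i) = -t * ∑ i, g (S i) := by rw [Finset.mul_sum]
    rw [this]
    nlinarith
  have hmarkov := mul_meas_ge_le_integral_of_nonneg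
    (ae_of_all _ fun S => (hFpos S).le) hFint c
  have hbound : (volume {S : Fin n → Ω | c ≤ F S}).toReal ≤ Real.exp (-(2 * n * ε ^ 2)) := by
    have hint_le : ∫ S, F S ≤ Real.exp (n * (t ^ 2 / 8) - t * n * μ) := by
      rw [hFval]
      calc (∫ x, Real.exp (-t * g x)) ^ n ≤ (1 + (Real.exp (-t) - 1) * μ) ^ n := by
            apply pow_le_pow_left₀ (integral_nonneg fun x => (Real.exp_pos _).le) hmgf
      _ ≤ (Real.exp (t ^ 2 / 8 - t * μ)) ^ n := by
            apply pow_le_pow_left₀ hbase_pos.le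
            rw [Real.exp_sub, le_div_iff₀ (Real.exp_pos _)]
            calc (1 + (Real.exp (-t) - 1) * μ) * Real.exp (t * μ)
                = Real.exp (t * μ) * (1 + (Real.exp (-t) - 1) * μ) := by ring
            _ ≤ Real.exp (t ^ 2 / 8) := hhoeff
      _ = Real.exp (n * (t ^ 2 / 8) - t * n * μ) := by
            rw [← Real.exp_nat_mul]
            congr 1
            ring
    have h1 : (volume {S : Fin n → Ω | c ≤ F S}).toReal ≤ (∫ S, F S) / c :=
      (le_div_iff₀ hcpos).2 (by simp only [Measure.real] at hmarkov; linarith [hmarkov])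
    calc (volume {S : Fin n → Ω | c ≤ F S}).toReal
        ≤ (∫ S, F S) / c := h1
    _ ≤ Real.exp (n * (t ^ 2 / 8) - t * n * μ) / c := by
        gcongr
    _ = Real.exp (n * (t ^ 2 / 8) - t * n * μ - t * (n * ε - n * μ)) := by
        rw [hc, ← Real.exp_sub]
    _ = Real.exp (-(2 * n * ε ^ 2)) := by
        congr 1
        rw [htdef]; ring
  calc (volume : Measure (Fin n → Ω)) {S | ∑ i, g (S i) ≤ n * (μ - ε)}
      ≤ volume {S : Fin n → Ω | c ≤ F S} := measure_mono hsub
  _ ≤ ENNReal.ofReal (Real.exp (-(2 * n * ε ^ 2))) :=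
      (ENNReal.le_ofReal_iff_toReal_le (measure_ne_top _ _) (Real.exp_pos _).le).2 hbound

set_option maxHeartbeats 1000000 in
/-- Deterministic PAC-Bayes generalization bound for engineered prompts (Eq. (8)):
the hypothesis class is `Θ = V^{K·L}` with an autoregressive language-model prior
`P θ = ∏ᵢ ∏ⱼ pᵢⱼ(θⁱⱼ | θⁱ₁,…,θⁱ_{j-1})`. With probability at least `1 - δ` over an
i.i.d. sample of size `n`, simultaneously for every `θ̂` with `P θ̂ > 0`,
`R θ̂ ≤ r θ̂ S + sqrt ((-∑ᵢ∑ⱼ log pᵢⱼ(θ̂ⁱⱼ|·) + log (n/δ) + 2) / (2 n - 1))`. -/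
theorem pac_bayes_prompts_lm_prior
    {X : Type*} [MeasurableSpace X]
    {V : Type*} [Fintype V] [Nonempty V]
    (K L : ℕ) (hK : 1 ≤ K) (hL : 1 ≤ L)
    (f : (Fin K → Fin L → V) → X → Fin K)
    (p : Fin K → (j : Fin L) → (Fin j → V) → V → ℝ)
    (hp0 : ∀ i j pre v, 0 ≤ p i j pre v)
    (hp1 : ∀ i j pre, ∑ v, p i j pre v = 1)
    (P : (Fin K → Fin L → V) → ℝ)
    (hP : ∀ θ, P θ =
      ∏ i, ∏ j, p i j (fun m => θ i (Fin.castLE j.isLt.le m)) (θ i j))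
    (D : Measure (X × Fin K)) [IsProbabilityMeasure D]
    (n : ℕ) (hn : 1 ≤ n)
    (δ : ℝ) (hδ0 : 0 < δ) (hδ1 : δ < 1)
    (R : (Fin K → Fin L → V) → ℝ)
    (hR : ∀ θ, R θ = ∫ q, (if f θ q.1 ≠ q.2 then (1 : ℝ) else 0) ∂D)
    (r : (Fin K → Fin L → V) → (Fin n → X × Fin K) → ℝ)
    (hr : ∀ θ S, r θ S = (∑ i, if f θ (S i).1 ≠ (S i).2 then (1 : ℝ) else 0) / n) :
    ENNReal.ofReal (1 - δ) ≤
      (Measure.pi fun _ : Fin n => D)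
        {S | ∀ θhat : Fin K → Fin L → V, 0 < P θhat →
          R θhat ≤ r θhat S +
            Real.sqrt
              ((-(∑ i, ∑ j, Real.log
                    (p i j (fun m => θhat i (Fin.castLE j.isLt.le m)) (θhat i j)))
                  + Real.log (n / δ) + 2) / (2 * n - 1))} := by
  classical
  letI : MeasureSpace (X × Fin K) := ⟨D⟩
  haveI hDvol : IsProbabilityMeasure (volume : Measure (X × Fin K)) :=
    ‹IsProbabilityMeasure D›
  set Pi' : Measure (Fin n → X × Fin K) := Measure.pi fun _ : Fin n => D with hPi'
  haveI : IsProbabilityMeasure Pi' := by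
    rw [hPi']; infer_instance
  have hn1 : (1 : ℝ) ≤ (n : ℝ) := by exact_mod_cast hn
  have hnpos : (0 : ℝ) < (n : ℝ) := by linarith
  have hden : (1 : ℝ) ≤ 2 * (n : ℝ) - 1 := by linarith
  -- basic facts about p
  have hple : ∀ i j pre v, p i j pre v ≤ 1 := by
    intro i j pre v
    have := Finset.single_le_sum (f := fun v => p i j pre v)
      (fun v _ => hp0 i j pre v) (Finset.mem_univ v)
    rw [hp1 i j pre] at this
    exact this
  -- the epsilon function
  set ε : (Fin K → Fin L → V) → ℝ := fun θ => Real.sqrt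
      ((-(∑ i, ∑ j, Real.log
            (p i j (fun m => θ i (Fin.castLE j.isLt.le m)) (θ i j)))
          + Real.log (n / δ) + 2) / (2 * n - 1)) with hε
  set C : (Fin K → Fin L → V) → Set (Fin n → X × Fin K) :=
    fun θ => {S | 0 < P θ ∧ ¬ R θ ≤ r θ S + ε θ} with hC
  -- per-θ bound
  have hPnonneg : ∀ θ : (Fin K → Fin L → V), 0 ≤ P θ := by
    intro θ
    rw [hP]
    exact Finset.prod_nonneg fun i _ => Finset.prod_nonneg fun j _ => hp0 _ _ _ _
  have key : ∀ θ : (Fin K → Fin L → V), Pi' (C θ) ≤ ENNReal.ofReal (P θ * δ) := by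
    intro θ
    by_cases hPθ : 0 < P θ
    · -- positivity of each factor
      have hppos : ∀ i j, 0 < p i j (fun m => θ i (Fin.castLE j.isLt.le m)) (θ i j) := by
        intro i j
        rcases (hp0 i j _ (θ i j)).lt_or_eq with h | h
        · exact h
        · exfalso
          have : P θ = 0 := by
            rw [hP]
            apply Finset.prod_eq_zero (Finset.mem_univ i)
            exact Finset.prod_eq_zero (Finset.mem_univ j) h.symm
          rw [this] at hPθ; exact lt_irrefl 0 hPθ
      set num : ℝ := -(∑ i, ∑ j, Real.log
            (p i j (fun m => θ i (Fin.castLE j.isLt.le m)) (θ i j)))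
          + Real.log (n / δ) + 2 with hnum
      have hlog_nonpos : (∑ i, ∑ j, Real.log
            (p i j (fun m => θ i (Fin.castLE j.isLt.le m)) (θ i j))) ≤ 0 := by
        apply Finset.sum_nonpos; intro i _
        apply Finset.sum_nonpos; intro j _
        exact Real.log_nonpos (hp0 _ _ _ _) (hple _ _ _ _)
      have hlognδ : 0 ≤ Real.log (n / δ) := by
        apply Real.log_nonneg
        rw [le_div_iff₀ hδ0]
        linarith
      have hnum_pos : 0 < num := by rw [hnum]; linarith
      have hεpos : 0 < ε θ := by
        rw [hε]
        apply Real.sqrt_pos.2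
        apply div_pos hnum_pos (by linarith)
      have hεsq : ε θ ^ 2 = num / (2 * n - 1) := by
        rw [hε]
        exact Real.sq_sqrt (div_nonneg hnum_pos.le (by linarith))
      -- exp bound
      have hexp_bound : Real.exp (-(2 * n * ε θ ^ 2)) ≤ P θ * δ := by
        have h2 : num ≤ 2 * n * ε θ ^ 2 := by
          rw [hεsq, ← mul_div_assoc, le_div_iff₀ (by linarith : (0:ℝ) < 2 * n - 1)]
          nlinarith
        have hPθexp : Real.exp (∑ i, ∑ j, Real.log
            (p i j (fun m => θ i (Fin.castLE j.isLt.le m)) (θ i j))) = P θ := by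
          rw [Real.exp_sum, hP]
          apply Finset.prod_congr rfl
          intro i _
          rw [Real.exp_sum]
          apply Finset.prod_congr rfl
          intro j _
          exact Real.exp_log (hppos i j)
        calc Real.exp (-(2 * n * ε θ ^ 2)) ≤ Real.exp (-num) :=
              Real.exp_le_exp.2 (by linarith)
        _ = Real.exp (∑ i, ∑ j, Real.log
              (p i j (fun m => θ i (Fin.castLE j.isLt.le m)) (θ i j)))
            * Real.exp (-Real.log (n / δ)) * Real.exp (-2) := by
            rw [← Real.exp_add, ← Real.exp_add]
            congr 1
            rw [hnum]; ring
        _ = P θ * (δ / n) * Real.exp (-2) := by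
            rw [hPθexp, Real.exp_neg, Real.exp_log (by positivity), inv_div]
        _ ≤ P θ * δ := by
            have hd : δ / n ≤ δ := div_le_self hδ0.le hn1
            have he2 : Real.exp (-2) ≤ 1 := Real.exp_le_one_iff.2 (by norm_num)
            have hdn : 0 ≤ δ / n := (div_pos hδ0 hnpos).le
            have h3 := mul_le_of_le_one_right (mul_nonneg (hPnonneg θ) hdn) he2
            have h4 := mul_le_mul_of_nonneg_left hd (hPnonneg θ)
            linarith
      -- the 0-1 loss function
      set g : X × Fin K → ℝ := fun q => if f θ q.1 ≠ q.2 then (1 : ℝ) else 0 with hg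
      have hg01 : ∀ q, g q = 0 ∨ g q = 1 := by
        intro q
        by_cases h : f θ q.1 ≠ q.2 <;> simp [hg, h]
      have hrg : ∀ S, r θ S = (∑ i, g (S i)) / n := fun S => hr θ S
      have hRg : R θ = ∫ q, g q ∂D := hR θ
      by_cases hgint : Integrable g D
      · obtain ⟨g', hg'm, hgae⟩ := hgint.1
        set g₂ : X × Fin K → ℝ := fun q => max 0 (min 1 (g' q)) with hg₂
        have hg₂m : Measurable g₂ :=
          measurable_const.max (measurable_const.min hg'm.measurable)
        have hg₂ae : g =ᵐ[D] g₂ := by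
          filter_upwards [hgae] with q hq
          rw [hg₂]
          simp only
          rw [← hq]
          rcases hg01 q with h | h <;> rw [h] <;> norm_num
        have hg₂0 : ∀ q, 0 ≤ g₂ q := fun q => le_max_left _ _
        have hg₂1 : ∀ q, g₂ q ≤ 1 := fun q => max_le zero_le_one (min_le_left _ _)
        have hμeq : ∫ q, g₂ q ∂D = R θ := by
          rw [hRg]
          exact (integral_congr_ae hg₂ae).symm
        -- null set where g and g₂ differ
        set N : Set (Fin n → X × Fin K) :=
          ⋃ i : Fin n, Function.eval i ⁻¹' {q | g q ≠ g₂ q} with hNdef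
        have hN : Pi' N = 0 := by
          apply measure_iUnion_null
          intro i
          apply MeasureTheory.Measure.pi_eval_preimage_null
          exact ae_iff.1 hg₂ae
        have hsubset : C θ ⊆
            {S | ∑ i, g₂ (S i) ≤ n * ((∫ q, g₂ q ∂D) - ε θ)} ∪ N := by
          intro S hS
          by_cases hSN : S ∈ N
          · exact Or.inr hSN
          · left
            have heq : ∀ i, g (S i) = g₂ (S i) := by
              intro i
              by_contra h
              exact hSN (Set.mem_iUnion.2 ⟨i, h⟩)
            obtain ⟨-, hS2⟩ := hS
            rw [not_le] at hS2
            have hrS : r θ S = (∑ i, g₂ (S i)) / n := by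
              rw [hrg]
              congr 1
              exact Finset.sum_congr rfl fun i _ => heq i
            rw [hμeq]
            have : (∑ i, g₂ (S i)) / n + ε θ < R θ := by
              rw [← hrS]; exact hS2
            have h3 : (∑ i, g₂ (S i)) / n < R θ - ε θ := by linarith
            rw [div_lt_iff₀ hnpos] at h3
            simp only [Set.mem_setOf_eq]
            nlinarith
        have hchern := chernoff (Ω := X × Fin K) g₂ hg₂m hg₂0 hg₂1 n hn (ε θ) hεpos
        calc Pi' (C θ) ≤ Pi' ({S | ∑ i, g₂ (S i) ≤ n * ((∫ q, g₂ q ∂D) - ε θ)} ∪ N) :=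
              measure_mono hsubset
        _ ≤ Pi' {S | ∑ i, g₂ (S i) ≤ n * ((∫ q, g₂ q ∂D) - ε θ)} + Pi' N :=
              measure_union_le _ _
        _ = Pi' {S | ∑ i, g₂ (S i) ≤ n * ((∫ q, g₂ q ∂D) - ε θ)} := by
              rw [hN, add_zero]
        _ ≤ ENNReal.ofReal (Real.exp (-(2 * n * ε θ ^ 2))) := hchern
        _ ≤ ENNReal.ofReal (P θ * δ) := ENNReal.ofReal_le_ofReal hexp_bound
      · -- non-integrable case : R θ = 0 and the inequality always holds
        have hR0 : R θ = 0 := by rw [hRg]; exact integral_undef hgint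
        have : C θ = ∅ := by
          ext S
          simp only [hC, Set.mem_setOf_eq, Set.mem_empty_iff_false, iff_false, not_and,
            not_not]
          intro _
          rw [hR0]
          have h1 : 0 ≤ r θ S := by
            rw [hrg]
            apply div_nonneg _ hnpos.le
            apply Finset.sum_nonneg
            intro i _
            rcases hg01 (S i) with h | h <;> rw [h] <;> norm_num
          have h2 : 0 ≤ ε θ := Real.sqrt_nonneg _
          linarith
        rw [this]
        simp
    · have : C θ = ∅ := by
        ext S
        simp only [hC, Set.mem_setOf_eq, Set.mem_empty_iff_false, iff_false, not_and]
        intro h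
        exact absurd h hPθ
      rw [this]
      simp
  -- total prior mass is 1
  have hsumP : ∑ θ : (Fin K → Fin L → V), P θ = 1 := by
    have h1 : ∀ θ : (Fin K → Fin L → V), P θ = ∏ i, (fun (i : Fin K) (w : Fin L → V) =>
        ∏ j, p i j (fun m => w (Fin.castLE j.isLt.le m)) (w j)) i (θ i) := by
      intro θ; rw [hP]
    calc ∑ θ : (Fin K → Fin L → V), P θ
        = ∑ θ ∈ Fintype.piFinset (fun _ : Fin K => (Finset.univ : Finset (Fin L → V))),
            ∏ i, (fun (i : Fin K) (w : Fin L → V) =>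
              ∏ j, p i j (fun m => w (Fin.castLE j.isLt.le m)) (w j)) i (θ i) := by
          rw [Fintype.piFinset_univ]
          exact Finset.sum_congr rfl fun θ _ => h1 θ
    _ = ∏ i, ∑ w : Fin L → V,
          ∏ j, p i j (fun m => w (Fin.castLE j.isLt.le m)) (w j) :=
        (Finset.prod_univ_sum (fun _ : Fin K => (Finset.univ : Finset (Fin L → V)))
          (fun (i : Fin K) (w : Fin L → V) =>
            ∏ j, p i j (fun m => w (Fin.castLE j.isLt.le m)) (w j))).symm
    _ = 1 := by
        apply Finset.prod_eq_one
        intro i _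
        exact sum_prod_cond L (p i) (hp1 i)
  -- union bound
  set Good : Set (Fin n → X × Fin K) :=
    {S | ∀ θhat : (Fin K → Fin L → V), 0 < P θhat → R θhat ≤ r θhat S + ε θhat} with hGood
  have hGoodc : Goodᶜ ⊆ ⋃ θ : (Fin K → Fin L → V), C θ := by
    intro S hS
    simp only [hGood, Set.mem_compl_iff, Set.mem_setOf_eq, not_forall] at hS
    obtain ⟨θ, hθ1, hθ2⟩ := hS
    exact Set.mem_iUnion.2 ⟨θ, hθ1, hθ2⟩
  have hBad : Pi' Goodᶜ ≤ ENNReal.ofReal δ := by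
    calc Pi' Goodᶜ ≤ Pi' (⋃ θ : (Fin K → Fin L → V), C θ) := measure_mono hGoodc
    _ ≤ ∑' θ : (Fin K → Fin L → V), Pi' (C θ) := measure_iUnion_le _
    _ = ∑ θ : (Fin K → Fin L → V), Pi' (C θ) := tsum_fintype _
    _ ≤ ∑ θ : (Fin K → Fin L → V), ENNReal.ofReal (P θ * δ) := Finset.sum_le_sum fun θ _ => key θ
    _ = ENNReal.ofReal (∑ θ : (Fin K → Fin L → V), P θ * δ) :=
        (ENNReal.ofReal_sum_of_nonneg fun θ _ =>
          mul_nonneg (hPnonneg θ) hδ0.le).symm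
    _ = ENNReal.ofReal δ := by rw [← Finset.sum_mul, hsumP, one_mul]
  have huniv : (1 : ℝ≥0∞) ≤ Pi' Good + Pi' Goodᶜ := by
    have := measure_union_le (μ := Pi') Good Goodᶜ
    rw [Set.union_compl_self] at this
    calc (1 : ℝ≥0∞) = Pi' Set.univ := measure_univ.symm
    _ ≤ Pi' Good + Pi' Goodᶜ := this
  have hfinal : ENNReal.ofReal (1 - δ) ≤ Pi' Good := by
    have h1 : ENNReal.ofReal (1 - δ) + ENNReal.ofReal δ = 1 := by
      rw [← ENNReal.ofReal_add (by linarith) hδ0.le]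
      norm_num
    have h2 : ENNReal.ofReal (1 - δ) + ENNReal.ofReal δ ≤ Pi' Good + ENNReal.ofReal δ := by
      rw [h1]
      calc (1 : ℝ≥0∞) ≤ Pi' Good + Pi' Goodᶜ := huniv
      _ ≤ Pi' Good + ENNReal.ofReal δ := add_le_add_right hBad _
    exact (ENNReal.add_le_add_iff_right ENNReal.ofReal_ne_top).1 h2
  exact hfinal
end
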